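/- Let S be a finite nonempty set of reals p_i with 0 < p_i < 1/2 such that ∏_{i∈S}(1-p_i) ≤ 1/2, but such that removing the element with minimum probability p_l yields a set S* with ∏_{i∈S*}(1-p_i) > 1/2. If p_m denotes the maximum probability in S, then ∑_{i∈S} p_i < 1 - (p_m - p_l). -/

import Mathlib

/-!
Let `j` be any element of the unsaturated set `S \ {l}` and `s` the sum of the other
probabilities there. From `1 - x ≤ exp (-x)` we get `1/2 < (1 - p j) exp (-s)`, and
`2 (1 - p j) ≤ exp (1 - 2 p j)` then forces `s < 1 - 2 p j`, i.e. the mean of `S \ {l}`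
is below `1 - p j`. Taking `j = m` (or, if `m = l`, any `j`, using `p l ≤ p j`) and
adding back `p l` gives the bound.
-/

open Finset Real

theorem prod_one_sub_le_exp_neg_sum {ι : Type*} {s : Finset ι} {p : ι → ℝ}
    (hp : ∀ i ∈ s, p i ≤ 1) : ∏ i ∈ s, (1 - p i) ≤ exp (-∑ i ∈ s, p i) := by
  rw [← sum_neg_distrib, exp_sum]
  exact prod_le_prod (fun i hi => sub_nonneg.mpr (hp i hi)) fun i _ => one_sub_le_exp_neg _

theorem sum_lt_one_sub_of_half_lt_prod_one_sub {ι : Type*} [DecidableEq ι] {s : Finset ι}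
    {p : ι → ℝ} (hp : ∀ i ∈ s, p i ≤ 1) (hprod : 1 / 2 < ∏ i ∈ s, (1 - p i))
    {j : ι} (hj : j ∈ s) : ∑ i ∈ s, p i < 1 - p j := by
  set t := ∑ i ∈ s.erase j, p i
  have hprod_le : ∏ i ∈ s, (1 - p i) ≤ (1 - p j) * exp (-t) := by
    rw [← mul_prod_erase s _ hj]
    exact mul_le_mul_of_nonneg_left
      (prod_one_sub_le_exp_neg_sum fun i hi => hp i (mem_of_mem_erase hi))
      (sub_nonneg.mpr (hp j hj))
  have hj_le : 2 * (1 - p j) ≤ exp (1 - 2 * p j) := by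
    linarith [add_one_le_exp (1 - 2 * p j)]
  have hexp : 1 < exp (1 - 2 * p j - t) := by
    rw [sub_eq_add_neg (1 - 2 * p j), exp_add]
    nlinarith [exp_pos (-t)]
  have ht : t < 1 - 2 * p j := by
    linarith [one_lt_exp_iff.mp hexp]
  rw [← add_sum_erase s p hj]
  linarith

theorem max_to_min_greedy_saturation_mean_bound_general
    {ι : Type*} [DecidableEq ι] (S : Finset ι) (p : ι → ℝ)
    (hp : ∀ i ∈ S, 0 < p i ∧ p i < 1/2)
    (l : ι) (hl : l ∈ S) (hlmin : ∀ i ∈ S, p l ≤ p i)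
    (hunsat : ∏ i ∈ S.erase l, (1 - p i) > 1/2)
    (m : ι) (hm : m ∈ S) :
    ∑ i ∈ S, p i < 1 - (p m - p l) := by
  have hp_le : ∀ i ∈ S.erase l, p i ≤ 1 := fun i hi => by
    linarith [hp i (mem_of_mem_erase hi)]
  have hmean := fun {j} (hj : j ∈ S.erase l) =>
    sum_lt_one_sub_of_half_lt_prod_one_sub hp_le hunsat hj
  rw [← add_sum_erase S p hl]
  by_cases hml : m = l
  · subst hml
    rcases (S.erase m).eq_empty_or_nonempty with hempty | ⟨j, hj⟩
    · linarith [hp m hm, show ∑ i ∈ S.erase m, p i = 0 by simp [hempty]]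
    · linarith [hmean hj, hlmin j (mem_of_mem_erase hj)]
  · linarith [hmean (mem_erase.mpr ⟨hml, hm⟩)]

theorem max_to_min_greedy_saturation_mean_bound
    {ι : Type*} [DecidableEq ι] (S : Finset ι) (p : ι → ℝ)
    (hne : S.Nonempty)
    (hp : ∀ i ∈ S, 0 < p i ∧ p i < 1/2)
    (hsat : ∏ i ∈ S, (1 - p i) ≤ 1/2)
    (l : ι) (hl : l ∈ S) (hlmin : ∀ i ∈ S, p l ≤ p i)
    (hunsat : ∏ i ∈ S.erase l, (1 - p i) > 1/2)
    (m : ι) (hm : m ∈ S) (hmmax : ∀ i ∈ S, p i ≤ p m) :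
    ∑ i ∈ S, p i < 1 - (p m - p l) :=
  max_to_min_greedy_saturation_mean_bound_general S p hp l hl hlmin hunsat m hm
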